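/- Let G be a finite group, H a normal subgroup of prime index p, x in G a lift of a generator of G/H, and F a field (not necessarily algebraically closed) of characteristic 0 or coprime to |G|. Let η be an irreducible F-representation of H with η not equivalent to η^x. Then the p representations η, η^x, …, η^{x^{p-1}} are pairwise inequivalent, the induced representation η↑_H^G is irreducible over F, and η↑_H^G ≅ η^x↑_H^G ≅ … ≅ η^{x^{p-1}}↑_H^G. -/

import Mathlib

open scoped TensorProduct

section Defs

variable {k : Type*} [Field k] {M : Type*} [Monoid M]

/-- Equivalence (isomorphism) of representations of a monoid over a field. -/
def RepIso {V W : Type*} [AddCommGroup V] [Module k V] [AddCommGroup W] [Module k W]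
    (ρ : Representation k M V) (ρ' : Representation k M W) : Prop :=
  ∃ e : V ≃ₗ[k] W, ∀ (g : M) (v : V), e (ρ g v) = ρ' g (e v)

/-- Irreducibility of a representation: the space is nonzero and has no proper nonzero
invariant subspace. -/
def RepIrred {V : Type*} [AddCommGroup V] [Module k V] (ρ : Representation k M V) : Prop :=
  Nontrivial V ∧ ∀ U : Submodule k V, (∀ g : M, ∀ v ∈ U, ρ g v ∈ U) → U = ⊥ ∨ U = ⊤

variable {G : Type*} [Group G]

/-- Conjugation by `x` as a monoid homomorphism of a normal subgroup. -/
def conjHom {H : Subgroup G} (hH : H.Normal) (x : G) : H →* H :=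
  MonoidHom.mk' (fun h => ⟨x * (h : G) * x⁻¹, hH.conj_mem (h : G) h.2 x⟩)
    (by intro a b; ext; push_cast; group)

/-- The conjugate representation `η^x`, `η^x(h) = η (x h x⁻¹)`. -/
def ConjRep {H : Subgroup G} (hH : H.Normal) (x : G) {V : Type*} [AddCommGroup V] [Module k V]
    (η : Representation k H V) : Representation k H V :=
  η.comp (conjHom hH x)

/-- `ρ` is (a model of) the representation of `G` induced from the representation `η` of the
subgroup `H`: there is an `H`-equivariant embedding `ι : V → W` and `W` is the internal direct
sum, over the cosets `gH`, of the translates `ρ(g)(ι V)`. -/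
def IsInducedFrom (H : Subgroup G) {V W : Type*} [AddCommGroup V] [Module k V]
    [AddCommGroup W] [Module k W]
    (η : Representation k H V) (ρ : Representation k G W) : Prop :=
  ∃ ι : V →ₗ[k] W, Function.Injective ι ∧
    (∀ (h : H) (v : V), ι (η h v) = ρ (h : G) (ι v)) ∧
    ∃ S : G ⧸ H → Submodule k W,
      (∀ g : G, S (g : G ⧸ H) = (LinearMap.range ι).map (ρ g)) ∧
      iSupIndep S ∧ iSup S = ⊤

/-- The subrepresentation on an invariant subspace. -/
def SubRep {V : Type*} [AddCommGroup V] [Module k V] (ρ : Representation k M V)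
    (U : Submodule k V) (hU : ∀ g : M, ∀ v ∈ U, ρ g v ∈ U) : Representation k M U where
  toFun g := LinearMap.restrict (ρ g) (hU g)
  map_one' := by ext v; simp [LinearMap.restrict_apply]
  map_mul' g g' := by ext v; simp [LinearMap.restrict_apply]

/-- The direct sum of a family of representations (realized on the product space). -/
def PiRep {ι : Type*} {W : ι → Type*} [∀ i, AddCommGroup (W i)] [∀ i, Module k (W i)]
    (ρ : ∀ i, Representation k M (W i)) : Representation k M (∀ i, W i) where
  toFun g := LinearMap.pi fun i => (ρ i g).comp (LinearMap.proj i)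
  map_one' := by ext v; simp
  map_mul' g g' := by ext v; simp

/-- Extension of scalars of a representation along a field extension `F ⊆ E`. -/
noncomputable def BaseChangeRep {F : Type*} [Field F] (E : Type*) [Field E] [Algebra F E]
    {V : Type*} [AddCommGroup V] [Module F V] (ρ : Representation F M V) :
    Representation E M (E ⊗[F] V) where
  toFun g := LinearMap.baseChange E (ρ g)
  map_one' := by ext v; simp
  map_mul' g g' := by ext v; simp [map_mul]

open scoped Classical in
/-- The conjugacy class sum of `x` in the group algebra. -/
noncomputable def classSum (k : Type*) [Field k] {G : Type*} [Group G] [Fintype G] (x : G) :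
    MonoidAlgebra k G :=
  ∑ g : G, if IsConj x g then MonoidAlgebra.single g (1 : k) else 0

/-- A primitive central idempotent of a ring. -/
def IsPrimCentralIdem {R : Type*} [Ring R] (e : R) : Prop :=
  e ≠ 0 ∧ IsIdempotentElem e ∧ e ∈ Set.center R ∧
    ∀ f : R, f ∈ Set.center R → IsIdempotentElem f → f * e = f → f = 0 ∨ f = e

/-- `e` is the primitive central idempotent of the group algebra attached to the irreducible
representation `ρ`: it is a primitive central idempotent acting as the identity on `ρ`. -/
noncomputable def IsIdemFor {V : Type*} [AddCommGroup V] [Module k V]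
    (ρ : Representation k M V) (e : MonoidAlgebra k M) : Prop :=
  IsPrimCentralIdem e ∧ ρ.asAlgebraHom e = 1

/-- `ρ'` is the twist of the `E`-representation `ρ` by the automorphism `γ` of `E` over `F`. -/
def IsTwist {F E : Type*} [Field F] [Field E] [Algebra F E]
    {V W : Type*} [AddCommGroup V] [Module E V] [AddCommGroup W] [Module E W]
    (γ : E ≃ₐ[F] E) (ρ : Representation E M V) (ρ' : Representation E M W) : Prop :=
  ∃ e : V ≃+ W, (∀ (c : E) (v : V), e (c • v) = γ c • e v) ∧
    ∀ (g : M) (v : V), e (ρ g v) = ρ' g (e v)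

/-- Two `E`-representations are Galois conjugate over `F`. -/
def IsGaloisConj (F : Type*) {E : Type*} [Field F] [Field E] [Algebra F E]
    {V W : Type*} [AddCommGroup V] [Module E V] [AddCommGroup W] [Module E W]
    (ρ : Representation E M V) (ρ' : Representation E M W) : Prop :=
  ∃ γ : E ≃ₐ[F] E, IsTwist γ ρ ρ'

/-- The canonical embedding of the group algebra of a subgroup into the group algebra
of the ambient group. -/
noncomputable def algEmb (k : Type*) [Field k] {G : Type*} [Group G] (H : Subgroup G) :
    MonoidAlgebra k H →ₐ[k] MonoidAlgebra k G :=
  MonoidAlgebra.mapDomainAlgHom k k H.subtype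

end Defs

/-! The inertia group `{g | η ≅ η^g}` contains `H`; as `[G : H]` is prime and `x` is not in it,
it equals `H`. Hence `η^a ≅ η^b` only when `aH = bH`, and the `η^(x^i)`, `i < p = ord(xH)`, are
pairwise inequivalent. An induced module is `W = ⨁_{gH} ρ(g) ι(V)`, and as a representation of `H`
the summand `ρ(g) ι(V)` is `η^(g⁻¹)`: the summands are irreducible and pairwise non-isomorphic, so
by Schur's lemma every irreducible `H`-submodule of `W` is one of them. A nonzero `G`-submodule
contains an irreducible `H`-submodule, hence a summand, hence all its translates, i.e. all of `W`.
Finally, induction is unique up to isomorphism, and a model induced from `η` is also one induced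
from `η^y` (embed by `ρ(y⁻¹) ∘ ι`). -/

section Irreducible

variable {k : Type*} [Field k] {M : Type*} [Monoid M]
variable {V : Type*} [AddCommGroup V] [Module k V] {V' : Type*} [AddCommGroup V'] [Module k V']
variable {W : Type*} [AddCommGroup W] [Module k W]

abbrev RepInvariant (ρ : Representation k M V) (U : Submodule k V) : Prop :=
  ∀ g : M, ∀ v ∈ U, ρ g v ∈ U

namespace RepIso

lemma refl (ρ : Representation k M V) : RepIso ρ ρ :=
  ⟨LinearEquiv.refl k V, fun _ _ => rfl⟩

lemma symm {ρ : Representation k M V} {ρ' : Representation k M V'} (h : RepIso ρ ρ') :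
    RepIso ρ' ρ := by
  obtain ⟨e, he⟩ := h
  exact ⟨e.symm, fun g v => e.injective (by simp [he])⟩

lemma trans {ρ : Representation k M V} {ρ' : Representation k M V'}
    {ρ'' : Representation k M W} (h : RepIso ρ ρ') (h' : RepIso ρ' ρ'') : RepIso ρ ρ'' := by
  obtain ⟨e, he⟩ := h
  obtain ⟨e', he'⟩ := h'
  exact ⟨e.trans e', fun g v => by simp [he, he']⟩

lemma of_bijective {ρ : Representation k M V} {ρ' : Representation k M V'} {f : V →ₗ[k] V'}
    (hf : Function.Bijective f) (hfρ : ∀ g v, f (ρ g v) = ρ' g (f v)) : RepIso ρ ρ' :=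
  ⟨LinearEquiv.ofBijective f hf, hfρ⟩

lemma repIrred {ρ : Representation k M V} {ρ' : Representation k M V'} (h : RepIso ρ ρ')
    (hρ : RepIrred ρ) : RepIrred ρ' := by
  obtain ⟨e, he⟩ := h
  refine ⟨e.toEquiv.nontrivial_congr.mp hρ.1, fun U hU => ?_⟩
  have hcomap : RepInvariant ρ (U.comap e.toLinearMap) := fun g v hv => by
    simpa [he] using hU g _ hv
  have hU_eq : U = (U.comap e.toLinearMap).map e.toLinearMap :=
    (Submodule.map_comap_eq_of_surjective e.surjective U).symm
  rcases hρ.2 _ hcomap with h | h <;> rw [hU_eq, h]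
  · exact Or.inl (Submodule.map_bot _)
  · exact Or.inr (by simp)

end RepIso

theorem bijective_of_repIrred {σ : Representation k M V} {ρ : Representation k M W}
    (hσ : RepIrred σ) (hρ : RepIrred ρ) {f : V →ₗ[k] W} (hf : ∀ g v, f (σ g v) = ρ g (f v))
    (hf0 : f ≠ 0) : Function.Bijective f := by
  refine ⟨?_, ?_⟩
  · rcases hσ.2 (LinearMap.ker f) fun g v hv => by simp_all with h | h
    · exact LinearMap.ker_eq_bot.mp h
    · exact absurd (LinearMap.ker_eq_top.mp h) hf0
  · rcases hρ.2 (LinearMap.range f) fun g _ ⟨v, hv⟩ => ⟨σ g v, by rw [hf, hv]⟩ with h | h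
    · exact absurd (LinearMap.range_eq_bot.mp h) hf0
    · exact LinearMap.range_eq_top.mp h

lemma repInvariant_range {σ : Representation k M V} {ρ : Representation k M W}
    {f : V →ₗ[k] W} (hf : ∀ g v, f (σ g v) = ρ g (f v)) : RepInvariant ρ (LinearMap.range f) :=
  fun g _ ⟨v, hv⟩ => ⟨σ g v, by rw [hf, hv]⟩

lemma repIso_subRep_of_eq_range {σ : Representation k M V} {ρ : Representation k M W}
    {f : V →ₗ[k] W} (hinj : Function.Injective f) (hf : ∀ g v, f (σ g v) = ρ g (f v))
    {U : Submodule k W} (hU : RepInvariant ρ U) (hUf : U = LinearMap.range f) :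
    RepIso σ (SubRep ρ U hU) := by
  subst hUf
  exact RepIso.of_bijective ⟨fun a b hab => hinj (congrArg Subtype.val hab),
    f.surjective_rangeRestrict⟩ fun g v => Subtype.ext (hf g v)

lemma repIrred_subRep_of_minimal {ρ : Representation k M W} {U : Submodule k W}
    (hU : RepInvariant ρ U) (hU0 : U ≠ ⊥)
    (hmin : ∀ U' ≤ U, RepInvariant ρ U' → U' ≠ ⊥ → U' = U) : RepIrred (SubRep ρ U hU) := by
  refine ⟨Submodule.nontrivial_iff_ne_bot.mpr hU0, fun U' hU' => ?_⟩
  have hinv : RepInvariant ρ (U'.map U.subtype) := by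
    rintro g _ ⟨v, hv, rfl⟩
    exact ⟨SubRep ρ U hU g v, hU' g v hv, rfl⟩
  refine (eq_or_ne U' ⊥).imp_right fun hne => ?_
  have hmap := hmin _ (Submodule.map_subtype_le U U') hinv (by
    rw [Ne, ← Submodule.map_bot U.subtype]
    exact (Submodule.map_injective_of_injective U.injective_subtype).ne hne)
  refine Submodule.map_injective_of_injective U.injective_subtype ?_
  rw [hmap, Submodule.map_top, Submodule.range_subtype]

lemma exists_repIrred_subRep_le [FiniteDimensional k W] (ρ : Representation k M W)
    {U : Submodule k W} (hU : RepInvariant ρ U) (hU0 : U ≠ ⊥) :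
    ∃ U₀ ≤ U, ∃ hU₀ : RepInvariant ρ U₀, RepIrred (SubRep ρ U₀ hU₀) := by
  obtain ⟨U₀, ⟨hle, hinv, hne⟩, hmin⟩ := wellFounded_lt.has_min
    {U' : Submodule k W | U' ≤ U ∧ RepInvariant ρ U' ∧ U' ≠ ⊥} ⟨U, le_rfl, hU, hU0⟩
  exact ⟨U₀, hle, hinv, repIrred_subRep_of_minimal hinv hne fun U' hU' hinv' hne' =>
    eq_of_le_of_not_lt hU' (hmin U' ⟨hU'.trans hle, hinv', hne'⟩)⟩

lemma RepIrred.finiteDimensional [Finite M] {ρ : Representation k M V} (hρ : RepIrred ρ) :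
    FiniteDimensional k V := by
  obtain ⟨v, hv⟩ := @exists_ne _ hρ.1 0
  let U := Submodule.span k (Set.range fun g : M => ρ g v)
  have hU : RepInvariant ρ U := by
    intro g w hw
    refine Submodule.span_induction ?_ (by simp) (fun _ _ _ _ => ?_) (fun _ _ _ => ?_) hw
    · rintro _ ⟨m, rfl⟩
      exact Submodule.subset_span ⟨g * m, by simp⟩
    all_goals simp_all [Submodule.add_mem, Submodule.smul_mem]
  have hvU : v ∈ U := Submodule.subset_span ⟨1, by simp⟩
  have hUtop : U = ⊤ := (hρ.2 U hU).resolve_left fun h => hv (by simpa [h] using hvU)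
  have : FiniteDimensional k U := FiniteDimensional.span_of_finite k (Set.finite_range _)
  exact Module.Finite.equiv ((LinearEquiv.ofEq _ _ hUtop).trans Submodule.topEquiv)

end Irreducible

lemma LinearMap.ext_of_iSup_eq_top {R M N : Type*} [Semiring R] [AddCommMonoid M] [Module R M]
    [AddCommMonoid N] [Module R N] {ι : Sort*} {T : ι → Submodule R M} (hT : iSup T = ⊤)
    {f g : M →ₗ[R] N} (h : ∀ i, ∀ w ∈ T i, f w = g w) : f = g :=
  LinearMap.eqLocus_eq_top.mp (eq_top_iff.mpr (hT ▸ iSup_le h))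

namespace DirectSum.IsInternal

variable {R W : Type*} [Ring R] [AddCommGroup W] [Module R W]
variable {ι : Type*} [DecidableEq ι] {T : ι → Submodule R W} (hT : DirectSum.IsInternal T)
include hT

noncomputable def proj (i : ι) : W →ₗ[R] T i :=
  DFinsupp.lapply i ∘ₗ (LinearEquiv.ofBijective (DirectSum.coeLinearMap T) hT).symm.toLinearMap

lemma proj_of_mem {i : ι} {w : W} (hw : w ∈ T i) : hT.proj i w = ⟨w, hw⟩ :=
  hT.ofBijective_coeLinearMap_of_mem hw

lemma proj_of_mem_ne {i j : ι} (hij : i ≠ j) {w : W} (hw : w ∈ T i) : hT.proj j w = 0 :=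
  hT.ofBijective_coeLinearMap_of_mem_ne hij hw

lemma ext_proj {w w' : W} (h : ∀ i, hT.proj i w = hT.proj i w') : w = w' :=
  (LinearEquiv.ofBijective (DirectSum.coeLinearMap T) hT).symm.injective (DFinsupp.ext h)

lemma proj_map_of_mapsTo {f : W →ₗ[R] W} (hf : ∀ i, ∀ w ∈ T i, f w ∈ T i) (i : ι) (w : W) :
    (hT.proj i (f w) : W) = f (hT.proj i w) := by
  have : (T i).subtype ∘ₗ hT.proj i ∘ₗ f = f ∘ₗ (T i).subtype ∘ₗ hT.proj i := by
    refine LinearMap.ext_of_iSup_eq_top hT.submodule_iSup_eq_top fun j w hw => ?_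
    by_cases hij : j = i
    · subst hij
      simp [hT.proj_of_mem hw, hT.proj_of_mem (hf j w hw)]
    · simp [hT.proj_of_mem_ne hij hw, hT.proj_of_mem_ne hij (hf j w hw)]
  exact LinearMap.congr_fun this w

end DirectSum.IsInternal

section Isotypic

variable {k : Type*} [Field k] {M : Type*} [Monoid M]
variable {W : Type*} [AddCommGroup W] [Module k W]

theorem DirectSum.IsInternal.exists_eq_of_repIrred {ι : Type*} [DecidableEq ι]
    {ρ : Representation k M W} {T : ι → Submodule k W} (hT : DirectSum.IsInternal T)
    (hTinv : ∀ i, RepInvariant ρ (T i)) (hTirr : ∀ i, RepIrred (SubRep ρ (T i) (hTinv i)))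
    (hTne : ∀ i j, RepIso (SubRep ρ (T i) (hTinv i)) (SubRep ρ (T j) (hTinv j)) → i = j)
    {U : Submodule k W} (hU : RepInvariant ρ U) (hUirr : RepIrred (SubRep ρ U hU)) :
    ∃ i, U = T i := by
  let π (i : ι) : U →ₗ[k] T i := hT.proj i ∘ₗ U.subtype
  have hπ (i : ι) (g : M) (u : U) : π i (SubRep ρ U hU g u) = SubRep ρ (T i) (hTinv i) g (π i u) :=
    Subtype.ext (hT.proj_map_of_mapsTo (fun j => hTinv j g) i u)
  have hbij (i : ι) (hi : π i ≠ 0) : Function.Bijective (π i) :=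
    bijective_of_repIrred hUirr (hTirr i) (hπ i) hi
  have huniq (i j : ι) (hi : π i ≠ 0) (hj : π j ≠ 0) : i = j :=
    hTne i j ((RepIso.of_bijective (hbij i hi) (hπ i)).symm.trans
      (RepIso.of_bijective (hbij j hj) (hπ j)))
  obtain ⟨i, hi⟩ : ∃ i, π i ≠ 0 := by
    by_contra! h
    obtain ⟨u, hu⟩ := @exists_ne _ hUirr.1 0
    exact hu (Subtype.ext (hT.ext_proj fun i => by simpa [π] using LinearMap.congr_fun (h i) u))
  have hle : U ≤ T i := by
    intro u hu
    have : u = hT.proj i u := hT.ext_proj fun j => by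
      by_cases hij : i = j
      · subst hij
        rw [hT.proj_of_mem (hT.proj i u).2]
      · rw [hT.proj_of_mem_ne hij (hT.proj i u).2]
        by_contra hne
        exact hij (huniq i j hi fun h => hne (by simpa [π] using LinearMap.congr_fun h ⟨u, hu⟩))
    exact this ▸ (hT.proj i u).2
  refine ⟨i, le_antisymm hle fun t ht => ?_⟩
  obtain ⟨u, hu⟩ := (hbij i hi).2 ⟨t, ht⟩
  have : (u : W) = t := by simpa [π, hT.proj_of_mem (hle u.2)] using congrArg Subtype.val hu
  exact this ▸ u.2

end Isotypic

lemma Subgroup.eq_or_eq_top_of_le_of_index_prime {G : Type*} [Group G] {H K : Subgroup G}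
    (hHK : H ≤ K) (hp : H.index.Prime) : K = H ∨ K = ⊤ := by
  rw [← Subgroup.relIndex_mul_index hHK] at hp
  rcases Nat.prime_mul_iff.mp hp with ⟨-, h⟩ | ⟨-, h⟩
  · exact Or.inr (Subgroup.index_eq_one.mp h)
  · exact Or.inl (le_antisymm (Subgroup.relIndex_eq_one.mp h) hHK)

section Conjugation

variable {k : Type*} [Field k] {G : Type*} [Group G] {H : Subgroup G} (hH : H.Normal)
variable {V : Type*} [AddCommGroup V] [Module k V] {V' : Type*} [AddCommGroup V'] [Module k V']

lemma conjRep_conjRep (a b : G) (η : Representation k H V) :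
    ConjRep hH a (ConjRep hH b η) = ConjRep hH (b * a) η := by
  have : (conjHom hH b).comp (conjHom hH a) = conjHom hH (b * a) := by
    ext h
    simp only [conjHom, MonoidHom.comp_apply, MonoidHom.mk'_apply]
    group
  rw [ConjRep, ConjRep, ConjRep, MonoidHom.comp_assoc, this]

lemma conjRep_one (η : Representation k H V) : ConjRep hH 1 η = η := by
  have : conjHom hH 1 = MonoidHom.id H := by ext h; simp [conjHom]
  rw [ConjRep, this, MonoidHom.comp_id]

lemma RepIso.conjRep {η : Representation k H V} {η' : Representation k H V'} (g : G)
    (h : RepIso η η') : RepIso (ConjRep hH g η) (ConjRep hH g η') := by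
  obtain ⟨e, he⟩ := h
  exact ⟨e, fun m v => he _ v⟩

lemma repIso_conjRep_of_mem (η : Representation k H V) {h : G} (hh : h ∈ H) :
    RepIso η (ConjRep hH h η) := by
  refine RepIso.of_bijective (η.apply_bijective ⟨h, hh⟩) fun g v => ?_
  have : (⟨h, hh⟩ : H) * g = conjHom hH h g * ⟨h, hh⟩ := by
    ext
    simp [conjHom]
  show η _ (η g v) = η (conjHom hH h g) (η _ v)
  rw [← Module.End.mul_apply, ← map_mul, this, map_mul, Module.End.mul_apply]

lemma RepIrred.conjRep {η : Representation k H V} (hη : RepIrred η) (g : G) :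
    RepIrred (ConjRep hH g η) := by
  refine ⟨hη.1, fun U hU => hη.2 U fun h v hv => ?_⟩
  have hh : g⁻¹ * (h : G) * g ∈ H := by simpa using hH.conj_mem _ h.2 g⁻¹
  have : conjHom hH g ⟨g⁻¹ * h * g, hh⟩ = h := by ext; simp [conjHom, mul_assoc]
  simpa [ConjRep, this] using hU ⟨_, hh⟩ v hv

def inertia (η : Representation k H V) : Subgroup G where
  carrier := {g | RepIso η (ConjRep hH g η)}
  one_mem' := by simpa [conjRep_one] using RepIso.refl η
  mul_mem' {a b} ha hb := by
    simpa [conjRep_conjRep] using hb.trans (ha.conjRep hH b)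
  inv_mem' {a} ha := by
    simpa [conjRep_conjRep, conjRep_one] using (ha.conjRep hH a⁻¹).symm

lemma le_inertia (η : Representation k H V) : H ≤ inertia hH η :=
  fun _ hh => repIso_conjRep_of_mem hH η hh

lemma mul_inv_mem_inertia_of_repIso {η : Representation k H V} {a b : G}
    (h : RepIso (ConjRep hH a η) (ConjRep hH b η)) : b * a⁻¹ ∈ inertia hH η := by
  simpa [inertia, conjRep_conjRep, conjRep_one] using h.conjRep hH a⁻¹

lemma inertia_le_of_not_repIso (hp : H.index.Prime) {η : Representation k H V} {x : G}
    (hx : ¬ RepIso η (ConjRep hH x η)) : inertia hH η ≤ H :=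
  ((Subgroup.eq_or_eq_top_of_le_of_index_prime (le_inertia hH η) hp).resolve_right
    fun h => hx (h ▸ Subgroup.mem_top x : x ∈ inertia hH η)).le

lemma mk_eq_of_repIso_conjRep {η : Representation k H V} (hη : inertia hH η ≤ H) {a b : G}
    (h : RepIso (ConjRep hH a η) (ConjRep hH b η)) : (a : G ⧸ H) = b :=
  (QuotientGroup.eq_iff_div_mem.mpr
    (div_eq_mul_inv b a ▸ hη (mul_inv_mem_inertia_of_repIso hH h))).symm

lemma not_repIso_conjRep_pow {η : Representation k H V} (hη : inertia hH η ≤ H) {x : G} {p : ℕ}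
    (hx : orderOf (x : G ⧸ H) = p) (i j : Fin p) (hij : i ≠ j) :
    ¬ RepIso (ConjRep hH (x ^ (i : ℕ)) η) (ConjRep hH (x ^ (j : ℕ)) η) := fun h =>
  hij (Fin.ext (pow_injOn_Iio_orderOf (x := (x : G ⧸ H)) (by simp [hx]) (by simp [hx])
    (by simpa using mk_eq_of_repIso_conjRep hH hη h)))

end Conjugation

theorem DirectSum.IsInternal.exists_linearEquiv_apply_eq {R : Type*} [Ring R]
    {ι : Type*} [DecidableEq ι] {V : ι → Type*} [∀ i, AddCommGroup (V i)] [∀ i, Module R (V i)]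
    {W W' : Type*} [AddCommGroup W] [Module R W] [AddCommGroup W'] [Module R W']
    {A : ∀ i, V i →ₗ[R] W} {A' : ∀ i, V i →ₗ[R] W'}
    (hA : ∀ i, Function.Injective (A i)) (hA' : ∀ i, Function.Injective (A' i))
    (h : DirectSum.IsInternal fun i => LinearMap.range (A i))
    (h' : DirectSum.IsInternal fun i => LinearMap.range (A' i)) :
    ∃ e : W ≃ₗ[R] W', ∀ i v, e (A i v) = A' i v := by
  generalize hT : (fun i => LinearMap.range (A i)) = T at h
  generalize hT' : (fun i => LinearMap.range (A' i)) = T' at h'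
  let u (i : ι) : V i ≃ₗ[R] T i :=
    (LinearEquiv.ofInjective (A i) (hA i)).trans (LinearEquiv.ofEq _ _ (congrFun hT i))
  let u' (i : ι) : V i ≃ₗ[R] T' i :=
    (LinearEquiv.ofInjective (A' i) (hA' i)).trans (LinearEquiv.ofEq _ _ (congrFun hT' i))
  let Φ := DFinsupp.mapRange.linearEquiv fun i => (u i).symm ≪≫ₗ u' i
  refine ⟨(LinearEquiv.ofBijective (DirectSum.coeLinearMap T) h).symm ≪≫ₗ Φ ≪≫ₗ
    LinearEquiv.ofBijective (DirectSum.coeLinearMap T') h', fun i v => ?_⟩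
  have hsymm : (LinearEquiv.ofBijective (DirectSum.coeLinearMap T) h).symm (A i v) =
      DirectSum.of _ i (u i v) := by
    rw [LinearEquiv.symm_apply_eq]
    exact (DirectSum.coeLinearMap_of T i (u i v)).symm
  have hΦ : Φ (DirectSum.of _ i (u i v)) = DirectSum.of _ i (u' i v) :=
    (DFinsupp.mapRange_single (hf := fun _ => map_zero _)).trans (by simp; rfl)
  rw [LinearEquiv.trans_apply, LinearEquiv.trans_apply, hsymm, hΦ]
  exact DirectSum.coeLinearMap_of T' i (u' i v)

section Induced

variable {F : Type*} [Field F] {G : Type*} [Group G] {H : Subgroup G} (hH : H.Normal)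
variable {V : Type*} [AddCommGroup V] [Module F V]
variable {W : Type*} [AddCommGroup W] [Module F W] {W' : Type*} [AddCommGroup W'] [Module F W']

lemma IsInducedFrom.conjRep {η : Representation F H V} {ρ : Representation F G W}
    (hInd : IsInducedFrom H η ρ) (y : G) : IsInducedFrom H (ConjRep hH y η) ρ := by
  obtain ⟨ι, hinj, hequiv, S, hS, hindep, hsup⟩ := hInd
  let σ := Equiv.mulRight ((y⁻¹ : G) : G ⧸ H)
  refine ⟨ρ y⁻¹ ∘ₗ ι, (ρ.apply_bijective _).1.comp hinj, fun h v => ?_, S ∘ σ, fun g => ?_,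
    hindep.comp σ.injective, σ.iSup_comp (g := S) ▸ hsup⟩
  · have : y⁻¹ * (y * h * y⁻¹) = h * y⁻¹ := by group
    simp only [LinearMap.comp_apply, ConjRep, MonoidHom.comp_apply, hequiv, conjHom,
      MonoidHom.mk'_apply, ← Module.End.mul_apply, ← map_mul, this]
  · simp only [Function.comp_apply, σ, Equiv.coe_mulRight, ← QuotientGroup.mk_mul, hS,
      LinearMap.range_comp, map_mul, Module.End.mul_eq_comp, Submodule.map_comp]

theorem IsInducedFrom.repIso {σ : Representation F H V} {ρ : Representation F G W}
    {ρ' : Representation F G W'} (h : IsInducedFrom H σ ρ) (h' : IsInducedFrom H σ ρ') :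
    RepIso ρ ρ' := by
  classical
  obtain ⟨ι, hinj, hequiv, S, hS, hindep, hsup⟩ := h
  obtain ⟨ι', hinj', hequiv', S', hS', hindep', hsup'⟩ := h'
  have hrange (q : G ⧸ H) : LinearMap.range (ρ q.out ∘ₗ ι) = S q := by
    rw [LinearMap.range_comp, ← hS, QuotientGroup.out_eq']
  have hrange' (q : G ⧸ H) : LinearMap.range (ρ' q.out ∘ₗ ι') = S' q := by
    rw [LinearMap.range_comp, ← hS', QuotientGroup.out_eq']
  obtain ⟨e, he⟩ := DirectSum.IsInternal.exists_linearEquiv_apply_eq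
    (A := fun q : G ⧸ H => ρ q.out ∘ₗ ι) (A' := fun q : G ⧸ H => ρ' q.out ∘ₗ ι')
    (fun q => (ρ.apply_bijective _).1.comp hinj) (fun q => (ρ'.apply_bijective _).1.comp hinj')
    (by simpa only [hrange] using
      DirectSum.isInternal_submodule_of_iSupIndep_of_iSup_eq_top hindep hsup)
    (by simpa only [hrange'] using
      DirectSum.isInternal_submodule_of_iSupIndep_of_iSup_eq_top hindep' hsup')
  have he_apply (g : G) (v : V) : e (ρ g (ι v)) = ρ' g (ι' v) := by
    let r := (g : G ⧸ H).out
    have hh : r⁻¹ * g ∈ H := QuotientGroup.eq.mp (QuotientGroup.out_eq' _)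
    let h₀ : H := ⟨r⁻¹ * g, hh⟩
    have hg : g = r * h₀ := by simp [h₀]
    calc e (ρ g (ι v)) = e (ρ r (ι (σ h₀ v))) := by
          rw [hequiv, ← Module.End.mul_apply, ← map_mul, ← hg]
      _ = ρ' r (ι' (σ h₀ v)) := he (g : G ⧸ H) _
      _ = ρ' g (ι' v) := by rw [hequiv', ← Module.End.mul_apply, ← map_mul, ← hg]
  refine ⟨e, fun g w => LinearMap.congr_fun (?_ : e.toLinearMap ∘ₗ ρ g = ρ' g ∘ₗ e) w⟩
  refine LinearMap.ext_of_iSup_eq_top hsup fun q w hw => ?_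
  obtain ⟨g', rfl⟩ := QuotientGroup.mk_surjective q
  rw [hS] at hw
  obtain ⟨_, ⟨v, rfl⟩, rfl⟩ := hw
  simp only [LinearMap.comp_apply, LinearEquiv.coe_coe, ← Module.End.mul_apply, ← map_mul,
    he_apply]

end Induced

section Irreducibility

variable {F : Type*} [Field F] {G : Type*} [Group G] {H : Subgroup G} (hH : H.Normal)
variable {V : Type*} [AddCommGroup V] [Module F V] {W : Type*} [AddCommGroup W] [Module F W]

lemma IsInducedFrom.finiteDimensional [Finite (G ⧸ H)] [FiniteDimensional F V]
    {η : Representation F H V} {ρ : Representation F G W} (hInd : IsInducedFrom H η ρ) :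
    FiniteDimensional F W := by
  obtain ⟨ι, -, -, S, hS, -, hsup⟩ := hInd
  rw [FiniteDimensional, Module.finite_def, ← hsup]
  refine Submodule.fg_iSup S fun q => ?_
  obtain ⟨g, rfl⟩ := QuotientGroup.mk_surjective q
  exact hS g ▸ Module.Finite.iff_fg.mp inferInstance

theorem IsInducedFrom.repIrred [Finite G] {η : Representation F H V} (hη : RepIrred η)
    (hinertia : inertia hH η ≤ H) {ρ : Representation F G W} (hInd : IsInducedFrom H η ρ) :
    RepIrred ρ := by
  classical
  have : FiniteDimensional F V := hη.finiteDimensional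
  have : FiniteDimensional F W := hInd.finiteDimensional
  obtain ⟨ι, hinj, hequiv, S, hS, hindep, hsup⟩ := hInd
  have hrange (g : G) : S g = LinearMap.range (ρ g ∘ₗ ι) := by rw [hS, LinearMap.range_comp]
  let ρH := ρ.comp H.subtype
  have hequivH (g : G) (h : H) (v : V) :
      (ρ g ∘ₗ ι) (ConjRep hH g⁻¹ η h v) = ρH h ((ρ g ∘ₗ ι) v) := by
    have : g * (g⁻¹ * h * g⁻¹⁻¹) = h * g := by group
    simp only [LinearMap.comp_apply, ConjRep, MonoidHom.comp_apply, hequiv, conjHom,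
      MonoidHom.mk'_apply, ← Module.End.mul_apply, ← map_mul, this, ρH, Subgroup.coe_subtype]
  have hinv (q : G ⧸ H) : RepInvariant ρH (S q) := by
    obtain ⟨g, rfl⟩ := QuotientGroup.mk_surjective q
    exact hrange g ▸ repInvariant_range (hequivH g)
  have hiso (g : G) : RepIso (ConjRep hH g⁻¹ η) (SubRep ρH (S g) (hinv g)) :=
    repIso_subRep_of_eq_range (f := ρ g ∘ₗ ι) ((ρ.apply_bijective g).1.comp hinj) (hequivH g) _
      (hrange g)
  have hirr (q : G ⧸ H) : RepIrred (SubRep ρH (S q) (hinv q)) := by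
    obtain ⟨g, rfl⟩ := QuotientGroup.mk_surjective q
    exact (hiso g).repIrred (hη.conjRep hH _)
  have hdistinct (q q' : G ⧸ H) (h : RepIso (SubRep ρH (S q) (hinv q))
      (SubRep ρH (S q') (hinv q'))) : q = q' := by
    obtain ⟨g, rfl⟩ := QuotientGroup.mk_surjective q
    obtain ⟨g', rfl⟩ := QuotientGroup.mk_surjective q'
    simpa using mk_eq_of_repIso_conjRep hH hinertia ((hiso g).trans (h.trans (hiso g').symm))
  refine ⟨@Function.Injective.nontrivial _ _ hη.1 _ hinj, fun U hU =>
    (eq_or_ne U ⊥).imp_right fun hU0 => ?_⟩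
  obtain ⟨U₀, hU₀U, hU₀, hU₀irr⟩ := exists_repIrred_subRep_le ρH (fun h => hU h) hU0
  obtain ⟨q, rfl⟩ := (DirectSum.isInternal_submodule_of_iSupIndep_of_iSup_eq_top hindep hsup
    ).exists_eq_of_repIrred hinv hirr hdistinct hU₀ hU₀irr
  obtain ⟨g, rfl⟩ := QuotientGroup.mk_surjective q
  rw [eq_top_iff, ← hsup]
  refine iSup_le fun q' => ?_
  obtain ⟨g', rfl⟩ := QuotientGroup.mk_surjective q'
  have : S g' = (S g).map (ρ (g' * g⁻¹)) := by
    rw [hS, hS, ← Submodule.map_comp, ← Module.End.mul_eq_comp, ← map_mul, inv_mul_cancel_right]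
  rw [this]
  rintro _ ⟨w, hw, rfl⟩
  exact hU _ _ (hU₀U hw)

end Irreducibility

theorem stmt_5_general {F : Type*} [Field F] {G : Type*} [Group G] [Fintype G]
    (p : ℕ) (hp : p.Prime) (H : Subgroup G) [hH : H.Normal] (hidx : H.index = p)
    (x : G) (hx : Subgroup.zpowers ((x : G ⧸ H)) = ⊤)
    {V : Type*} [AddCommGroup V] [Module F V]
    (η : Representation F H V) (hirr : RepIrred η)
    (hne : ¬ RepIso η (ConjRep hH x η)) :
    (∀ i j : Fin p, i ≠ j →
        ¬ RepIso (ConjRep hH (x ^ (i : ℕ)) η) (ConjRep hH (x ^ (j : ℕ)) η)) ∧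
    (∀ {W : Type*} [AddCommGroup W] [Module F W] (ρ : Representation F G W),
        IsInducedFrom H η ρ → RepIrred ρ) ∧
    (∀ (i : Fin p) {W W' : Type*} [AddCommGroup W] [Module F W]
        [AddCommGroup W'] [Module F W']
        (ρ : Representation F G W) (ρ' : Representation F G W'),
        IsInducedFrom H η ρ → IsInducedFrom H (ConjRep hH (x ^ (i : ℕ)) η) ρ' →
        RepIso ρ ρ') := by
  have hinertia : inertia hH η ≤ H := inertia_le_of_not_repIso hH (hidx ▸ hp) hne
  have horder : orderOf (x : G ⧸ H) = p :=
    hidx ▸ orderOf_eq_card_of_forall_mem_zpowers fun q => hx ▸ Subgroup.mem_top q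
  exact ⟨not_repIso_conjRep_pow hH hinertia horder, fun ρ hInd => hInd.repIrred hH hirr hinertia,
    fun i _ _ _ _ _ _ ρ ρ' hInd hInd' => (hInd.conjRep hH _).repIso hInd'⟩

/-- Over a not necessarily algebraically closed field `F`, if `η ≇ η^x` then
`η, η^x, …, η^{x^{p-1}}` are pairwise inequivalent, `η↑_H^G` is irreducible, and all the
`η^{x^i}↑_H^G` are equivalent. -/
theorem stmt_5 {F : Type*} [Field F] {G : Type*} [Group G] [Fintype G]
    (hchar : CharZero F ∨ Nat.Coprime (ringChar F) (Fintype.card G))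
    (p : ℕ) (hp : p.Prime) (H : Subgroup G) [hH : H.Normal] (hidx : H.index = p)
    (x : G) (hx : Subgroup.zpowers ((x : G ⧸ H)) = ⊤)
    {V : Type*} [AddCommGroup V] [Module F V]
    (η : Representation F H V) (hirr : RepIrred η)
    (hne : ¬ RepIso η (ConjRep hH x η)) :
    (∀ i j : Fin p, i ≠ j →
        ¬ RepIso (ConjRep hH (x ^ (i : ℕ)) η) (ConjRep hH (x ^ (j : ℕ)) η)) ∧
    (∀ {W : Type*} [AddCommGroup W] [Module F W] (ρ : Representation F G W),
        IsInducedFrom H η ρ → RepIrred ρ) ∧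
    (∀ (i : Fin p) {W W' : Type*} [AddCommGroup W] [Module F W]
        [AddCommGroup W'] [Module F W']
        (ρ : Representation F G W) (ρ' : Representation F G W'),
        IsInducedFrom H η ρ → IsInducedFrom H (ConjRep hH (x ^ (i : ℕ)) η) ρ' →
        RepIso ρ ρ') :=
  stmt_5_general p hp H (hH := hH) hidx x hx η hirr hne
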